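/- arXiv:2312.14707 — 2 statements merged into one kernel-verified Lean document; each statement's English description precedes it below -/
import Mathlib

section
/- Let (𝔤, 𝔥, σ, I₀, ⟨,⟩) be a para-Hermitian symmetric system with 𝔤 simple whose isotropy center is two-dimensional, so that 𝔤 admits a complex structure i commuting with σ. Then for every (λ,μ) ≠ (0,0), the bilinear form f_{(λ,μ)}(X,Y) = λB(X,Y) + μB(iX,Y) restricted to the (−1)-eigenspace 𝔫 of σ is a nondegenerate symmetric bilinear form of signature (n,n), where dim_ℝ 𝔫 = 2n and B is the Killing form of 𝔤. -/
open Module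

/-- The real bilinear form `f_{(λ,μ)}(X,Y) = λB(X,Y) + μB(iX,Y)` on a complex Lie
algebra `𝔤` viewed as a real Lie algebra, where `B = 2 Re B̃` is the real Killing form
(`B̃` the complex Killing form) and `i` is the complex structure. -/
noncomputable def fForm (𝔤 : Type*) [LieRing 𝔤] [LieAlgebra ℂ 𝔤] (lam mu : ℝ) :
    𝔤 → 𝔤 → ℝ := fun X Y =>
  lam * (2 * (killingForm ℂ 𝔤 X Y).re)
    + mu * (2 * (killingForm ℂ 𝔤 ((Complex.I : ℂ) • X) Y).re)

/-!
With `c = 2 (λ + μ i)`, the form `f_{(λ,μ)}` is the real part of the complex bilinear form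
`c B̃`, and `𝔫` is a complex subspace because `σ` commutes with `i`. Over `ℂ` the nondegenerate
symmetric form `c B̃|_𝔫` has an orthonormal basis `e_1, …, e_n`. Then `Re (c B̃)` is `+1` on the
`e_j`, `-1` on the `i e_j`, and the `e_j, i e_j` form a real basis of `𝔫`. Nondegeneracy also
follows directly: `Re (c B̃)(X, -iY) = Im (c B̃)(X, Y)`.
-/

open Submodule Complex

namespace LinearMap.BilinForm

section Orthonormal

variable {K M : Type*} [Field K] [AddCommGroup M] [Module K M]

theorem linearIndependent_of_apply_eq_ite {ι : Type*} [DecidableEq ι]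
    {B : LinearMap.BilinForm K M} {v : ι → M}
    (hv : ∀ i j, B (v i) (v j) = if i = j then 1 else 0) : LinearIndependent K v :=
  linearIndependent_of_iIsOrtho (B := B) (fun i j hij => (hv i j).trans (if_neg hij))
    fun i => by simp [hv]

theorem exists_basis_apply_eq_ite [IsAlgClosed K] [Invertible (2 : K)] [FiniteDimensional K M]
    {B : LinearMap.BilinForm K M} (hB : LinearMap.IsSymm B) (hB' : B.SeparatingLeft) :
    ∃ b : Basis (Fin (finrank K M)) K M, ∀ i j, B (b i) (b j) = if i = j then 1 else 0 := by
  obtain ⟨b, hb⟩ := exists_orthogonal_basis hB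
  have hself i : B (b i) (b i) ≠ 0 := hb.not_isOrtho_basis_self_of_separatingLeft hB' i
  choose r hr using fun i => IsAlgClosed.exists_pow_nat_eq (B (b i) (b i))⁻¹ two_pos
  have hr0 i : r i ≠ 0 := by
    intro h
    exact hself i (by simpa [h] using (hr i).symm)
  refine ⟨b.isUnitSMul fun i => (hr0 i).isUnit, fun i j => ?_⟩
  simp only [Basis.isUnitSMul_apply, map_smul, smul_apply, smul_eq_mul]
  split_ifs with hij
  · subst hij
    rw [← mul_assoc, ← sq, hr, inv_mul_cancel₀ (hself i)]
  · rw [hb hij, mul_zero, mul_zero]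

end Orthonormal

variable {E : Type*} [AddCommGroup E] [Module ℝ E]

theorem apply_sum_smul_self_eq_sum_sq {ι : Type*} [Fintype ι] [DecidableEq ι]
    {B : LinearMap.BilinForm ℝ E} {v : ι → E}
    (hv : ∀ i j, B (v i) (v j) = if i = j then 1 else 0) (a : ι → ℝ) :
    B (∑ i, a i • v i) (∑ i, a i • v i) = ∑ i, a i ^ 2 := by
  simp [map_sum, hv, sq]

theorem pos_of_mem_span_of_apply_eq_ite {ι : Type*} [Fintype ι] [DecidableEq ι]
    {B : LinearMap.BilinForm ℝ E} {v : ι → E} (hv : ∀ i j, B (v i) (v j) = if i = j then 1 else 0)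
    {x : E} (hx : x ∈ span ℝ (Set.range v)) (hx0 : x ≠ 0) : 0 < B x x := by
  obtain ⟨a, rfl⟩ := (mem_span_range_iff_exists_fun ℝ).1 hx
  obtain ⟨i, hi⟩ : ∃ i, a i ≠ 0 := by
    by_contra! h
    simp [h] at hx0
  rw [apply_sum_smul_self_eq_sum_sq hv]
  exact Finset.sum_pos' (fun j _ => sq_nonneg (a j)) ⟨i, Finset.mem_univ i, by positivity⟩

end LinearMap.BilinForm

section ComplexBilinForm

variable {V : Type*} [AddCommGroup V] [Module ℂ V]

theorem Complex.smul_eq_re_smul_add_im_smul_I_smul (z : ℂ) (x : V) :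
    z • x = z.re • x + z.im • I • x := by
  conv_lhs => rw [← re_add_im z]
  rw [add_smul, mul_smul, coe_smul, coe_smul]

theorem Submodule.exists_restrictScalars_eq_of_I_smul_mem (p : Submodule ℝ V)
    (hp : ∀ x ∈ p, I • x ∈ p) : ∃ q : Submodule ℂ V, q.restrictScalars ℝ = p :=
  ⟨{ p with
      smul_mem' := fun z x hx => by
        rw [Complex.smul_eq_re_smul_add_im_smul_I_smul]
        exact p.add_mem (p.smul_mem _ hx) (p.smul_mem _ (hp x hx)) }, rfl⟩

theorem Submodule.restrictScalars_eq_span_sup_span_I_smul {N : Submodule ℂ V} {ι : Type*}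
    [Fintype ι] (b : Basis ι ℂ N) :
    N.restrictScalars ℝ =
      span ℝ (Set.range fun i => (b i : V)) ⊔ span ℝ (Set.range fun i => I • (b i : V)) := by
  refine le_antisymm (fun x hx => ?_) (sup_le ?_ ?_)
  · have hx' : ∑ i, b.repr ⟨x, hx⟩ i • (b i : V) = x := by
      simpa only [coe_sum, coe_smul] using congrArg Subtype.val (b.sum_repr ⟨x, hx⟩)
    rw [← hx']
    refine sum_mem fun i _ => ?_
    rw [Complex.smul_eq_re_smul_add_im_smul_I_smul]
    exact add_mem (mem_sup_left (smul_mem _ _ (subset_span ⟨i, rfl⟩)))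
      (mem_sup_right (smul_mem _ _ (subset_span ⟨i, rfl⟩)))
  · exact span_le.2 <| Set.range_subset_iff.2 fun i => (b i).2
  · exact span_le.2 <| Set.range_subset_iff.2 fun i => N.smul_mem I (b i).2

noncomputable def reBilinForm (β : LinearMap.BilinForm ℂ V) : LinearMap.BilinForm ℝ V :=
  (β.restrictScalars₁₂ ℝ ℝ).compr₂ reLm

variable {β : LinearMap.BilinForm ℂ V}

@[simp]
theorem reBilinForm_apply (x y : V) : reBilinForm β x y = (β x y).re := rfl

theorem reBilinForm_isSymm (hβ : LinearMap.IsSymm β) : LinearMap.IsSymm (reBilinForm β) :=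
  ⟨fun x y => by simp [← hβ.eq x y]⟩

theorem forall_reBilinForm_eq_zero_iff {N : Submodule ℂ V} {x : V} :
    (∀ y ∈ N, reBilinForm β x y = 0) ↔ ∀ y ∈ N, β x y = 0 := by
  refine ⟨fun h y hy => Complex.ext (h y hy) ?_, fun h y hy => by simp [h y hy]⟩
  simpa using h (-(I • y)) (N.neg_mem (N.smul_mem I hy))

theorem exists_reBilinForm_signature {N : Submodule ℂ V} [FiniteDimensional ℂ N]
    (hβ : LinearMap.IsSymm β) (hN : ∀ x ∈ N, (∀ y ∈ N, β x y = 0) → x = 0) :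
    ∃ P Q : Submodule ℝ V, P ⊓ Q = ⊥ ∧ P ⊔ Q = N.restrictScalars ℝ ∧
      finrank ℝ P = finrank ℂ N ∧ finrank ℝ Q = finrank ℂ N ∧
      (∀ x ∈ P, x ≠ 0 → 0 < reBilinForm β x x) ∧ (∀ x ∈ Q, x ≠ 0 → reBilinForm β x x < 0) := by
  have hsymm : LinearMap.IsSymm (β.restrict N) := ⟨fun x y => hβ.eq x y⟩
  have hsep : (β.restrict N).SeparatingLeft := fun x hx =>
    Subtype.ext (hN x x.2 fun y hy => hx ⟨y, hy⟩)
  obtain ⟨b, hb⟩ := LinearMap.BilinForm.exists_basis_apply_eq_ite hsymm hsep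
  set u := fun i => (b i : V)
  set w := fun i => I • (b i : V)
  have hu : ∀ i j, reBilinForm β (u i) (u j) = if i = j then 1 else 0 := fun i j => by
    simpa [apply_ite] using congrArg re (hb i j)
  have hw : ∀ i j, (-reBilinForm β) (w i) (w j) = if i = j then 1 else 0 := fun i j => by
    simpa [w, apply_ite] using congrArg re (hb i j)
  have hpos : ∀ x ∈ span ℝ (Set.range u), x ≠ 0 → 0 < reBilinForm β x x := fun x hx hx0 =>
    LinearMap.BilinForm.pos_of_mem_span_of_apply_eq_ite hu hx hx0
  have hneg : ∀ x ∈ span ℝ (Set.range w), x ≠ 0 → reBilinForm β x x < 0 := fun x hx hx0 =>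
    neg_pos.1 (LinearMap.BilinForm.pos_of_mem_span_of_apply_eq_ite hw hx hx0)
  refine ⟨_, _, (Submodule.eq_bot_iff _).2 fun x hx => ?_,
    (restrictScalars_eq_span_sup_span_I_smul b).symm, ?_, ?_, hpos, hneg⟩
  · by_contra hx0
    exact lt_asymm (hpos x (mem_inf.1 hx).1 hx0) (hneg x (mem_inf.1 hx).2 hx0)
  · rw [finrank_span_eq_card (LinearMap.BilinForm.linearIndependent_of_apply_eq_ite hu),
      Fintype.card_fin]
  · rw [finrank_span_eq_card (LinearMap.BilinForm.linearIndependent_of_apply_eq_ite hw),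
      Fintype.card_fin]

end ComplexBilinForm

theorem fForm_eq_reBilinForm (𝔤 : Type*) [LieRing 𝔤] [LieAlgebra ℂ 𝔤] (lam mu : ℝ)
    (X Y : 𝔤) :
    fForm 𝔤 lam mu X Y = reBilinForm ((⟨2 * lam, 2 * mu⟩ : ℂ) • killingForm ℂ 𝔤) X Y := by
  simp [fForm, mul_re]
  ring

theorem fForm_nondegenerate_signature_general
    (𝔤 : Type*) [LieRing 𝔤] [LieAlgebra ℂ 𝔤] [Module.Finite ℂ 𝔤]
    (σ : 𝔤 →ₗ[ℝ] 𝔤)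
    (hσi : ∀ x, σ ((Complex.I : ℂ) • x) = (Complex.I : ℂ) • σ x)
    (𝔫 : Submodule ℝ 𝔤) (h𝔫 : ∀ x, x ∈ 𝔫 ↔ σ x = -x)
    (n : ℕ) (hdim : finrank ℝ 𝔫 = 2 * n)
    (hnd : ∀ x ∈ 𝔫, (∀ y ∈ 𝔫, killingForm ℂ 𝔤 x y = 0) → x = 0) :
    ∀ lam mu : ℝ, (lam, mu) ≠ (0, 0) →
      (∀ X ∈ 𝔫, ∀ Y ∈ 𝔫, fForm 𝔤 lam mu X Y = fForm 𝔤 lam mu Y X) ∧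
      (∀ X ∈ 𝔫, (∀ Y ∈ 𝔫, fForm 𝔤 lam mu X Y = 0) → X = 0) ∧
      (∃ P Q : Submodule ℝ 𝔤, P ≤ 𝔫 ∧ Q ≤ 𝔫 ∧
        finrank ℝ P = n ∧ finrank ℝ Q = n ∧ P ⊓ Q = ⊥ ∧ P ⊔ Q = 𝔫 ∧
        (∀ x ∈ P, x ≠ 0 → 0 < fForm 𝔤 lam mu x x) ∧
        (∀ x ∈ Q, x ≠ 0 → fForm 𝔤 lam mu x x < 0)) := by
  intro lam mu hne
  set c : ℂ := ⟨2 * lam, 2 * mu⟩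
  have hc : c ≠ 0 := fun h => hne <| by
    simpa [c] using And.intro (congrArg re h) (congrArg im h)
  obtain ⟨N, rfl⟩ : ∃ N : Submodule ℂ 𝔤, N.restrictScalars ℝ = 𝔫 :=
    exists_restrictScalars_eq_of_I_smul_mem 𝔫 fun x hx => by
      rw [h𝔫] at hx ⊢
      rw [hσi, hx, smul_neg]
  have hsymm : LinearMap.IsSymm (c • killingForm ℂ 𝔤) :=
    ⟨fun x y => by simp [LieModule.traceForm_comm ℂ 𝔤 𝔤 x y]⟩
  have hcnd : ∀ x ∈ N, (∀ y ∈ N, (c • killingForm ℂ 𝔤) x y = 0) → x = 0 := fun x hx h =>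
    hnd x hx fun y hy => (mul_eq_zero.1 (h y hy)).resolve_left hc
  simp only [fForm_eq_reBilinForm]
  obtain ⟨P, Q, hinf, hsup, hP, hQ, hpos, hneg⟩ := exists_reBilinForm_signature hsymm hcnd
  have hn : finrank ℂ N = n := by
    have h2n : 2 * finrank ℂ N = 2 * n := (finrank_real_of_complex N).symm.trans hdim
    omega
  exact ⟨fun X _ Y _ => (reBilinForm_isSymm hsymm).eq X Y,
    fun X hX h => hcnd X hX (forall_reBilinForm_eq_zero_iff.1 h),
    P, Q, hsup ▸ le_sup_left, hsup ▸ le_sup_right, hn ▸ hP, hn ▸ hQ, hinf, hsup, hpos, hneg⟩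

/-- Let `(𝔤, 𝔥, σ, I₀, ⟨,⟩)` be a para-Hermitian symmetric system with `𝔤` simple and
two-dimensional isotropy center, so that `𝔤` carries a complex structure `i` commuting
with `σ`.  Let `𝔫` be the `(−1)`-eigenspace of `σ`, with `dim_ℝ 𝔫 = 2n` and the
complex Killing form nondegenerate on `𝔫`.  Then for every `(λ,μ) ≠ (0,0)` the form
`f_{(λ,μ)}(X,Y) = λB(X,Y) + μB(iX,Y)` restricted to `𝔫` is a nondegenerate symmetric
bilinear form of signature `(n,n)`. -/
theorem fForm_nondegenerate_signature
    (𝔤 : Type*) [LieRing 𝔤] [LieAlgebra ℂ 𝔤] [Module.Finite ℂ 𝔤]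
    [LieAlgebra.IsSimple ℂ 𝔤]
    (σ : 𝔤 →ₗ[ℝ] 𝔤)
    (hσ2 : ∀ x, σ (σ x) = x)
    (hσbr : ∀ x y, σ ⁅x, y⁆ = ⁅σ x, σ y⁆)
    (hσi : ∀ x, σ ((Complex.I : ℂ) • x) = (Complex.I : ℂ) • σ x)
    (𝔫 : Submodule ℝ 𝔤) (h𝔫 : ∀ x, x ∈ 𝔫 ↔ σ x = -x)
    (n : ℕ) (hdim : finrank ℝ 𝔫 = 2 * n)
    (hnd : ∀ x ∈ 𝔫, (∀ y ∈ 𝔫, killingForm ℂ 𝔤 x y = 0) → x = 0) :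
    ∀ lam mu : ℝ, (lam, mu) ≠ (0, 0) →
      (∀ X ∈ 𝔫, ∀ Y ∈ 𝔫, fForm 𝔤 lam mu X Y = fForm 𝔤 lam mu Y X) ∧
      (∀ X ∈ 𝔫, (∀ Y ∈ 𝔫, fForm 𝔤 lam mu X Y = 0) → X = 0) ∧
      (∃ P Q : Submodule ℝ 𝔤, P ≤ 𝔫 ∧ Q ≤ 𝔫 ∧
        finrank ℝ P = n ∧ finrank ℝ Q = n ∧ P ⊓ Q = ⊥ ∧ P ⊔ Q = 𝔫 ∧
        (∀ x ∈ P, x ≠ 0 → 0 < fForm 𝔤 lam mu x x) ∧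
        (∀ x ∈ Q, x ≠ 0 → fForm 𝔤 lam mu x x < 0)) :=
  fForm_nondegenerate_signature_general 𝔤 σ hσi 𝔫 h𝔫 n hdim hnd
end

section
/- On the vector space 𝔡 = 𝔰𝔩(2,ℝ) ⊕ 𝔰𝔩(2,ℝ)*, the bracket defined by [e₁,e₂] = e₃ + cη₃, [e₁,e₃] = e₂ − cη₂, [e₂,e₃] = e₁ + cη₁, [η₁,e₂] = η₃, [η₁,e₃] = −η₂, [η₂,e₁] = η₃, [η₂,e₃] = −η₁, [η₃,e₁] = η₂, [η₃,e₂] = −η₁, with 𝔰𝔩(2,ℝ)* abelian and c ∈ ℝ, c ≠ 0, satisfies the Jacobi identity (so 𝔡 is a Lie algebra), and the symmetric bilinear form ⟨α₁+x₁, α₂+x₂⟩ = α₁(x₂) + α₂(x₁) is nondegenerate and ad-invariant. -/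
open Finset

/-- The quadratic extension `𝔡 = 𝔰𝔩(2,ℝ) ⊕ 𝔰𝔩(2,ℝ)*`, encoded by coordinates: the
first factor carries the coordinates with respect to the basis `{e₁,e₂,e₃}` of
`𝔰𝔩(2,ℝ)` (with `[e₁,e₂] = e₃`, `[e₁,e₃] = e₂`, `[e₂,e₃] = e₁`), the second the
coordinates with respect to the dual basis `{η₁,η₂,η₃}`. -/
abbrev Dalg := (Fin 3 → ℝ) × (Fin 3 → ℝ)

/-- The bracket of `𝔰𝔩(2,ℝ)` in the basis `{e₁,e₂,e₃}`. -/
def slBr (u v : Fin 3 → ℝ) : Fin 3 → ℝ :=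
  ![u 1 * v 2 - u 2 * v 1, u 0 * v 2 - u 2 * v 0, u 0 * v 1 - u 1 * v 0]

/-- The coadjoint action terms `[ηᵢ,eⱼ]`: `[η₁,e₂] = η₃`, `[η₁,e₃] = −η₂`,
`[η₂,e₁] = η₃`, `[η₂,e₃] = −η₁`, `[η₃,e₁] = η₂`, `[η₃,e₂] = −η₁`. -/
def coadBr (a v : Fin 3 → ℝ) : Fin 3 → ℝ :=
  ![-(a 1 * v 2) - a 2 * v 1, -(a 0 * v 2) + a 2 * v 0, a 0 * v 1 + a 1 * v 0]

/-- The bracket of the quadratic extension `𝔡`: `[e₁,e₂] = e₃ + cη₃`,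
`[e₁,e₃] = e₂ − cη₂`, `[e₂,e₃] = e₁ + cη₁`, together with the coadjoint action of
`𝔰𝔩(2,ℝ)` on `𝔰𝔩(2,ℝ)*`, and `𝔰𝔩(2,ℝ)*` abelian. -/
def dBr (c : ℝ) (x y : Dalg) : Dalg :=
  (slBr x.1 y.1,
    c • ![x.1 1 * y.1 2 - x.1 2 * y.1 1, -(x.1 0 * y.1 2 - x.1 2 * y.1 0),
        x.1 0 * y.1 1 - x.1 1 * y.1 0]
      + coadBr x.2 y.1 - coadBr y.2 x.1)

/-- The symmetric bilinear form `⟨α₁+x₁, α₂+x₂⟩ = α₁(x₂) + α₂(x₁)` on `𝔡`. -/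
def dForm (x y : Dalg) : ℝ := (∑ i, x.2 i * y.1 i) + (∑ i, y.2 i * x.1 i)

/-- The bracket of the quadratic extension `𝔡 = 𝔰𝔩(2,ℝ) ⊕ 𝔰𝔩(2,ℝ)*` (with `c ≠ 0`)
is antisymmetric and satisfies the Jacobi identity, so `𝔡` is a Lie algebra; and the
symmetric bilinear form `⟨α₁+x₁, α₂+x₂⟩ = α₁(x₂) + α₂(x₁)` is nondegenerate and
ad-invariant. -/
theorem dBr_lieAlgebra_and_dForm_invariant (c : ℝ) (hc : c ≠ 0) :
    (∀ x y : Dalg, dBr c x y = - dBr c y x) ∧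
    (∀ x y z : Dalg,
      dBr c x (dBr c y z) + dBr c y (dBr c z x) + dBr c z (dBr c x y) = 0) ∧
    (∀ x : Dalg, (∀ y : Dalg, dForm x y = 0) → x = 0) ∧
    (∀ x y z : Dalg, dForm (dBr c x y) z + dForm y (dBr c x z) = 0) := by
  refine ⟨?_, ?_, ?_, ?_⟩
  · intro x y
    refine Prod.ext ?_ ?_ <;> funext i <;> fin_cases i <;>
      simp [dBr, slBr, coadBr, Fin.isValue, Matrix.cons_val_zero, Matrix.cons_val_one,
        Matrix.head_cons] <;> ring
  · intro x y z
    refine Prod.ext ?_ ?_ <;> funext i <;> fin_cases i <;>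
      simp [dBr, slBr, coadBr, Fin.isValue, Matrix.cons_val_zero, Matrix.cons_val_one,
        Matrix.head_cons] <;> ring
  · intro x hx
    have h1 : ∀ j : Fin 3, x.2 j = 0 := by
      intro j
      have := hx (Pi.single j 1, 0)
      simpa [dForm, Fin.sum_univ_three, Pi.single_apply] using this
    have h2 : ∀ j : Fin 3, x.1 j = 0 := by
      intro j
      have := hx (0, Pi.single j 1)
      simp [dForm, Fin.sum_univ_three, Pi.single_apply] at this
      fin_cases j <;> simp_all
    exact Prod.ext (funext h2) (funext h1)
  · intro x y z
    simp only [dForm, dBr, slBr, coadBr, Fin.sum_univ_three]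
    simp [Fin.isValue, Matrix.cons_val_zero, Matrix.cons_val_one, Matrix.head_cons]
    ring
end
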